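/- Fix an integer n ≥ 2 and a real number γ with 1 − cos(2γ)^{2n−2} ≠ 0. Then a real number β is a critical point of the map β ↦ f_n(γ,β) (i.e., ∂f_n/∂β(γ,β) = 0) with cos(4β) ≠ 0 if and only if tan(4β) = 4·sin(γ)·cos(γ)^{2n−2} / (1 − cos(2γ)^{2n−2}). -/

import Mathlib

open Real

/-- The deviation from `1/2` of the per-edge expectation value of the level-1 QAOA
for MAX-CUT on the complete graph `K_{2n}`. -/
noncomputable def qaoaF (n : ℕ) (γ β : ℝ) : ℝ :=
  (1 / 2) * sin (4 * β) * sin γ * cos γ ^ (2 * n - 2)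
    - (1 / 4) * sin (2 * β) ^ 2 * (1 - cos (2 * γ) ^ (2 * n - 2))

/-! Writing `A = sin γ cos γ^{2n-2}` and `B = 1 - cos(2γ)^{2n-2}`, the identity
`(sin² 2β)' = 2 sin 4β` gives `∂f/∂β = (4A cos 4β - B sin 4β)/2`, which vanishes with
`cos 4β ≠ 0` exactly when `tan 4β = 4A/B`. For the converse one needs `A ≠ 0`, and this
follows from `B ≠ 0` because the exponent `2n-2` is even. -/

/-- Mathlib's `tan x` is `0` where `cos x = 0`, so it is `a ≠ 0` that forces `cos x ≠ 0`. -/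
theorem Real.tan_eq_div_iff {a b x : ℝ} (ha : a ≠ 0) (hb : b ≠ 0) :
    tan x = a / b ↔ a * cos x = b * sin x ∧ cos x ≠ 0 := by
  by_cases hc : cos x = 0
  · simp [tan_eq_sin_div_cos, hc, (div_ne_zero ha hb).symm]
  · rw [tan_eq_sin_div_cos, div_eq_div_iff hc hb, mul_comm b, eq_comm]
    exact (and_iff_left hc).symm

theorem sin_mul_cos_pow_ne_zero_of_one_sub_cos_two_mul_pow_ne_zero {γ : ℝ} {k : ℕ}
    (hk : Even k) (h : 1 - cos (2 * γ) ^ k ≠ 0) : sin γ * cos γ ^ k ≠ 0 := by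
  have hsin : sin γ ≠ 0 := by
    intro hs
    apply h
    rw [cos_two_mul_eq_one_sub, hs]
    ring
  have hcos : cos γ ≠ 0 := by
    intro hc
    apply h
    rw [cos_two_mul, hc, show (2 : ℝ) * 0 ^ 2 - 1 = -1 by ring, hk.neg_one_pow]
    ring
  exact mul_ne_zero hsin (pow_ne_zero k hcos)

theorem hasDerivAt_qaoaF (n : ℕ) (γ β : ℝ) :
    HasDerivAt (qaoaF n γ) ((4 * sin γ * cos γ ^ (2 * n - 2) * cos (4 * β)
      - (1 - cos (2 * γ) ^ (2 * n - 2)) * sin (4 * β)) / 2) β := by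
  have hsin4 := ((hasDerivAt_id' β).const_mul 4).sin
  have hsin2sq := (((hasDerivAt_id' β).const_mul 2).sin).pow 2
  refine ((((hsin4.const_mul (1 / 2)).mul_const (sin γ)).mul_const _).sub
    ((hsin2sq.const_mul (1 / 4)).mul_const _)).congr_deriv ?_
  have hsin4_eq : sin (4 * β) = 2 * sin (2 * β) * cos (2 * β) := by
    rw [← sin_two_mul]
    ring_nf
  push_cast
  linear_combination (1 - cos (2 * γ) ^ (2 * n - 2)) / 2 * hsin4_eq

theorem qaoaF_critical_point_iff_general (n : ℕ) (γ : ℝ)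
    (hγ : 1 - cos (2 * γ) ^ (2 * n - 2) ≠ 0) (β : ℝ) :
    (deriv (fun b => qaoaF n γ b) β = 0 ∧ cos (4 * β) ≠ 0) ↔
      tan (4 * β)
        = 4 * sin γ * cos γ ^ (2 * n - 2) / (1 - cos (2 * γ) ^ (2 * n - 2)) := by
  have hA : 4 * sin γ * cos γ ^ (2 * n - 2) ≠ 0 := by
    rw [mul_assoc]
    exact mul_ne_zero four_ne_zero
      (sin_mul_cos_pow_ne_zero_of_one_sub_cos_two_mul_pow_ne_zero ⟨n - 1, by omega⟩ hγ)
  rw [(hasDerivAt_qaoaF n γ β).deriv, Real.tan_eq_div_iff hA hγ, div_eq_zero_iff,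
    sub_eq_zero]
  simp only [two_ne_zero, or_false]

/-- For `n ≥ 2` and `γ` with `1 - cos(2γ)^{2n-2} ≠ 0`, a real `β` is a critical point of
`β ↦ f_n(γ,β)` with `cos(4β) ≠ 0` if and only if
`tan(4β) = 4·sin(γ)·cos(γ)^{2n-2} / (1 - cos(2γ)^{2n-2})`. -/
theorem qaoaF_critical_point_iff (n : ℕ) (hn : 2 ≤ n) (γ : ℝ)
    (hγ : 1 - cos (2 * γ) ^ (2 * n - 2) ≠ 0) (β : ℝ) :
    (deriv (fun b => qaoaF n γ b) β = 0 ∧ cos (4 * β) ≠ 0) ↔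
      tan (4 * β)
        = 4 * sin γ * cos γ ^ (2 * n - 2) / (1 - cos (2 * γ) ^ (2 * n - 2)) :=
  qaoaF_critical_point_iff_general n γ hγ β
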